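/- For p = 1 and r ≥ 1, the diameter of OΓ_n^{(1,r)} equals n. -/

import Mathlib

/-- Hamming distance between two binary words (as lists). -/
def hdist (u v : List Bool) : ℕ := (List.zipWith bne u v).count true

/-- `w` is an I-Fibonacci (p,r)-code: no factor `1^(r+1)` and no factor `1 0^s 1` with `s < p`
(equivalently: maximal blocks of 1s have length ≤ r and blocks of 1s are separated by ≥ p zeros). -/
def ICode (p r : ℕ) (w : List Bool) : Prop :=
  ¬ (List.replicate (r + 1) true <:+: w) ∧
  ∀ s < p, ¬ ((true :: (List.replicate s false ++ [true])) <:+: w)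

/-- `w` is an O-Fibonacci (p,r)-code: no factor `(10^(p-1))^r 1` and no factor `1 0^s 1`
with `s ≤ p - 2`. -/
def OCode (p r : ℕ) (w : List Bool) : Prop :=
  ¬ (((List.replicate r (true :: List.replicate (p - 1) false)).flatten ++ [true]) <:+: w) ∧
  ∀ s, s + 2 ≤ p → ¬ ((true :: (List.replicate s false ++ [true])) <:+: w)

/-- Vertex type of the I-Fibonacci (p,r)-cube of dimension n. -/
def IVert (p r n : ℕ) := {w : List Bool // w.length = n ∧ ICode p r w}

/-- Vertex type of the O-Fibonacci (p,r)-cube of dimension n. -/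
def OVert (p r n : ℕ) := {w : List Bool // w.length = n ∧ OCode p r w}

/-- The I-Fibonacci (p,r)-cube: vertices adjacent iff they differ in exactly one coordinate. -/
def IGraph (p r n : ℕ) : SimpleGraph (IVert p r n) :=
  SimpleGraph.fromRel (fun u v => hdist u.1 v.1 = 1)

/-- The O-Fibonacci (p,r)-cube. -/
def OGraph (p r n : ℕ) : SimpleGraph (OVert p r n) :=
  SimpleGraph.fromRel (fun u v => hdist u.1 v.1 = 1)

/-- Eccentricity of a vertex. -/
noncomputable def ecc {V : Type*} (G : SimpleGraph V) (v : V) : ℕ :=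
  sSup {d | ∃ u, G.dist v u = d}

/-- Radius of a graph. -/
noncomputable def grad {V : Type*} (G : SimpleGraph V) : ℕ :=
  sInf {e | ∃ v, ecc G v = e}

/-- Diameter of a graph. -/
noncomputable def gdiam {V : Type*} (G : SimpleGraph V) : ℕ :=
  sSup {d | ∃ u v, G.dist u v = d}

/-- Degree of a vertex (number of neighbours). -/
noncomputable def deg {V : Type*} (G : SimpleGraph V) (v : V) : ℕ :=
  {u | G.Adj v u}.ncard

/-!
For `p = 1` the code condition only forbids a run of `r + 1` ones, so it survives clearing
bits. Hence between two codewords `u` and `v` one can walk down from `u` to `u ∧ v` and then up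
to `v`, flipping one differing bit per step, and the graph distance is the Hamming distance;
in particular it is at most `n`. Conversely, for `r ≥ 1` the two alternating words `1010…` and
`0101…` are codewords at Hamming distance `n`.
-/

open SimpleGraph

@[simp]
lemma hdist_nil_left (v : List Bool) : hdist [] v = 0 := rfl

@[simp]
lemma hdist_nil_right (u : List Bool) : hdist u [] = 0 := by simp [hdist]

@[simp]
lemma hdist_cons_cons (a b : Bool) (u v : List Bool) :
    hdist (a :: u) (b :: v) = hdist u v + if a = b then 0 else 1 := by
  cases a <;> cases b <;> simp [hdist]

@[simp]
lemma hdist_self (u : List Bool) : hdist u u = 0 := by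
  induction u with
  | nil => rfl
  | cons a u ih => simp [ih]

lemma hdist_comm (u v : List Bool) : hdist u v = hdist v u := by
  induction u generalizing v with
  | nil => simp
  | cons a u ih =>
    cases v with
    | nil => simp
    | cons b v => simp [ih, eq_comm]

lemma hdist_le_length (u v : List Bool) : hdist u v ≤ u.length :=
  List.count_le_length.trans (by simp)

lemma eq_of_hdist_eq_zero {u v : List Bool} (hl : u.length = v.length) (h : hdist u v = 0) :
    u = v := by
  induction u generalizing v with
  | nil => simp_all [eq_comm]
  | cons a u ih =>
    cases v with
    | nil => simp at hl
    | cons b v =>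
      simp only [hdist_cons_cons, Nat.add_eq_zero_iff, ite_eq_left_iff, one_ne_zero,
        imp_false, not_not] at h
      rw [h.2, ih (by simpa using hl) h.1]

lemma hdist_triangle {u w v : List Bool} (huw : u.length = w.length) (hwv : w.length = v.length) :
    hdist u v ≤ hdist u w + hdist w v := by
  induction u generalizing w v with
  | nil => simp
  | cons a u ih =>
    obtain _ | ⟨b, w⟩ := w
    · simp at huw
    obtain _ | ⟨c, v⟩ := v
    · simp
    have := ih (w := w) (v := v) (by simpa using huw) (by simpa using hwv)
    cases a <;> cases b <;> cases c <;> simp <;> omega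

def Hereditary (P : List Bool → Prop) : Prop :=
  ∀ ⦃u v : List Bool⦄, List.Forall₂ (· ≤ ·) u v → P v → P u

lemma forall₂_le_zipWith_and_left {u v : List Bool} (hl : u.length = v.length) :
    List.Forall₂ (· ≤ ·) (List.zipWith and u v) u := by
  induction u generalizing v with
  | nil => simp
  | cons a u ih =>
    obtain _ | ⟨b, v⟩ := v
    · simp at hl
    exact .cons (by cases a <;> cases b <;> decide) (ih (by simpa using hl))

lemma hdist_zipWith_and_add {u v : List Bool} (hl : u.length = v.length) :
    hdist u (List.zipWith and u v) + hdist (List.zipWith and u v) v = hdist u v := by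
  induction u generalizing v with
  | nil => simp
  | cons a u ih =>
    obtain _ | ⟨b, v⟩ := v
    · simp at hl
    have := ih (by simpa using hl)
    cases a <;> cases b <;> simp <;> omega

lemma exists_hdist_eq_one_of_forall₂_le {u v : List Bool} {k : ℕ}
    (huv : List.Forall₂ (· ≤ ·) u v) (hk : hdist u v = k + 1) :
    ∃ w, List.Forall₂ (· ≤ ·) w v ∧ hdist u w = 1 ∧ hdist w v = k := by
  induction huv generalizing k with
  | nil => simp at hk
  | @cons a b u v hab huv ih =>
    by_cases h : a = b
    · subst h
      obtain ⟨w, hwv, huw, hw⟩ := ih (by simpa using hk)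
      exact ⟨a :: w, .cons le_rfl hwv, by simpa using huw, by simpa using hw⟩
    · obtain ⟨rfl, rfl⟩ : a = false ∧ b = true := by
        cases a <;> cases b <;> simp_all [Bool.le_iff_imp]
      exact ⟨true :: u, .cons le_rfl huv, by simp, by simpa using hk⟩

section Graph

variable {p r n : ℕ}

lemma OGraph_adj_iff {u v : OVert p r n} : (OGraph p r n).Adj u v ↔ hdist u.1 v.1 = 1 := by
  rw [OGraph, SimpleGraph.fromRel_adj, hdist_comm v.1, or_self, and_iff_right_iff_imp]
  rintro h rfl
  simp at h

lemma hdist_le_length_of_walk {u v : OVert p r n} (W : (OGraph p r n).Walk u v) :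
    hdist u.1 v.1 ≤ W.length := by
  induction W with
  | nil => simp
  | @cons a b c hab W ih =>
    have := hdist_triangle (u := a.1) (w := b.1) (v := c.1)
      (a.2.1.trans b.2.1.symm) (b.2.1.trans c.2.1.symm)
    rw [OGraph_adj_iff.1 hab] at this
    rw [Walk.length_cons]
    omega

lemma exists_walk_length_eq_hdist_of_forall₂_le (hP : Hereditary (OCode p r))
    {u v : OVert p r n} (huv : List.Forall₂ (· ≤ ·) u.1 v.1) :
    ∃ W : (OGraph p r n).Walk u v, W.length = hdist u.1 v.1 := by
  generalize hk : hdist u.1 v.1 = k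
  induction k generalizing u with
  | zero =>
    obtain rfl : u = v := Subtype.ext (eq_of_hdist_eq_zero (u.2.1.trans v.2.1.symm) hk)
    exact ⟨.nil, rfl⟩
  | succ k ih =>
    obtain ⟨w, hwv, huw, hw⟩ := exists_hdist_eq_one_of_forall₂_le huv hk
    obtain ⟨W, hW⟩ := ih (u := ⟨w, hwv.length_eq.trans v.2.1, hP hwv v.2.2⟩) hwv hw
    exact ⟨.cons (OGraph_adj_iff.2 huw) W, congrArg (· + 1) hW⟩

theorem OGraph_dist_eq_hdist (hP : Hereditary (OCode p r)) (u v : OVert p r n) :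
    (OGraph p r n).dist u v = hdist u.1 v.1 := by
  have hl : u.1.length = v.1.length := u.2.1.trans v.2.1.symm
  let m : OVert p r n := ⟨List.zipWith and u.1 v.1,
    (forall₂_le_zipWith_and_left hl).length_eq.trans u.2.1,
    hP (forall₂_le_zipWith_and_left hl) u.2.2⟩
  have hmv : List.Forall₂ (· ≤ ·) m.1 v.1 := by
    simpa [List.zipWith_comm_of_comm Bool.and_comm] using forall₂_le_zipWith_and_left hl.symm
  obtain ⟨Wu, hWu⟩ := exists_walk_length_eq_hdist_of_forall₂_le (u := m) (v := u) hP
    (forall₂_le_zipWith_and_left hl)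
  obtain ⟨Wv, hWv⟩ := exists_walk_length_eq_hdist_of_forall₂_le (u := m) hP hmv
  have hW : (Wu.reverse.append Wv).length = hdist u.1 v.1 := by
    rw [Walk.length_append, Walk.length_reverse, hWu, hWv, hdist_comm,
      hdist_zipWith_and_add hl]
  refine le_antisymm (hW ▸ dist_le _) ?_
  obtain ⟨W, hW⟩ := (Wu.reverse.append Wv).reachable.exists_walk_length_eq_dist
  exact hW ▸ hdist_le_length_of_walk W

end Graph

lemma List.Forall₂.exists_infix {α β : Type*} {R : α → β → Prop} {l u : List α} {v : List β}
    (huv : List.Forall₂ R u v) (hl : l <:+: u) : ∃ l', l' <:+: v ∧ List.Forall₂ R l l' := by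
  obtain ⟨s, t, rfl⟩ := hl
  refine ⟨(v.drop s.length).take l.length,
    ((v.drop s.length).take_prefix _).isInfix.trans (v.drop_suffix _).isInfix, ?_⟩
  simpa using List.forall₂_take l.length (List.forall₂_drop s.length huv)

lemma eq_replicate_true_of_forall₂_le {m : ℕ} {l : List Bool}
    (h : List.Forall₂ (· ≤ ·) (List.replicate m true) l) : l = List.replicate m true := by
  induction m generalizing l with
  | zero => simpa using h
  | succ m ih =>
    obtain ⟨b, l, hb, hl, rfl⟩ := List.forall₂_cons_left_iff.1 h
    rw [ih hl, Bool.eq_true_of_true_le hb, List.replicate_succ]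

lemma OCode_one_iff {r : ℕ} {w : List Bool} :
    OCode 1 r w ↔ ¬ List.replicate (r + 1) true <:+: w := by
  simp [OCode, List.replicate_succ']

lemma hereditary_OCode_one (r : ℕ) : Hereditary (OCode 1 r) := by
  intro u v huv hv
  rw [OCode_one_iff] at hv ⊢
  intro hu
  obtain ⟨l, hl, hrep⟩ := huv.exists_infix hu
  exact hv (eq_replicate_true_of_forall₂_le hrep ▸ hl)

def altWord : Bool → ℕ → List Bool
  | _, 0 => []
  | b, n + 1 => b :: altWord (!b) n

@[simp]
lemma length_altWord (b : Bool) (n : ℕ) : (altWord b n).length = n := by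
  induction n generalizing b <;> simp [altWord, *]

lemma hdist_altWord_not (b : Bool) (n : ℕ) : hdist (altWord b n) (altWord (!b) n) = n := by
  induction n generalizing b with
  | zero => rfl
  | succ n ih => simpa [altWord] using ih (!b)

lemma isChain_ne_altWord (b : Bool) (n : ℕ) : List.IsChain (· ≠ ·) (altWord b n) := by
  induction n generalizing b with
  | zero => exact .nil
  | succ n ih =>
    refine (ih (!b)).cons fun y hy => ?_
    cases n <;> simp_all [altWord]

lemma OCode_altWord {r : ℕ} (hr : 1 ≤ r) (b : Bool) (n : ℕ) : OCode 1 r (altWord b n) := by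
  rw [OCode_one_iff]
  intro h
  have h11 : [true, true] <:+: List.replicate (r + 1) true := by
    obtain ⟨k, rfl⟩ := Nat.exists_eq_add_of_le' hr
    exact ⟨[], List.replicate k true, by simp [List.replicate_succ]⟩
  simpa using (isChain_ne_altWord b n).infix (h11.trans h)

lemma gdiam_eq_of_forall_dist_le {V : Type*} {G : SimpleGraph V} {d : ℕ}
    (hle : ∀ u v, G.dist u v ≤ d) {u v : V} (huv : G.dist u v = d) : gdiam G = d :=
  IsGreatest.csSup_eq ⟨⟨u, v, huv⟩, by rintro _ ⟨u, v, rfl⟩; exact hle u v⟩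

theorem OGraph_diam_p_one_general (r n : ℕ) (hr : 1 ≤ r) :
    gdiam (OGraph 1 r n) = n := by
  have hdist_eq := OGraph_dist_eq_hdist (n := n) (hereditary_OCode_one r)
  let alt (b : Bool) : OVert 1 r n := ⟨altWord b n, length_altWord b n, OCode_altWord hr b n⟩
  refine gdiam_eq_of_forall_dist_le (fun u v => ?_) (u := alt true) (v := alt false) ?_
  · exact (hdist_eq u v).trans_le ((hdist_le_length _ _).trans_eq u.2.1)
  · exact (hdist_eq _ _).trans (hdist_altWord_not true n)

/-- `diam(OΓ_n^{(1,r)}) = n`. -/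
theorem OGraph_diam_p_one (r n : ℕ) (hr : 1 ≤ r) (hn : 1 ≤ n) :
    gdiam (OGraph 1 r n) = n :=
  OGraph_diam_p_one_general r n hr
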